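/- Let d ≥ 1 and let μ, e, A⁺, A⁻, ε > 0 be constants. Let c⁺, c⁻ : ℝ×ℝ^d → ℝ be C^∞ with c⁺ > 0, c⁻ > 0, let ψ : ℝ×ℝ^d → ℝ and u : ℝ×ℝ^d → ℝ^d be C^∞, all ℤ^d-periodic in space, and assume pointwise: ∂ₜc⁺ + div(c⁺u) = div(A⁺∇c⁺) + div(A⁺ e c⁺∇ψ); ∂ₜc⁻ + div(c⁻u) = div(A⁻∇c⁻) − div(A⁻ e c⁻∇ψ); and −εΔψ = e(c⁺ − c⁻). Then for every t ∈ ℝ, the derivative at t of the function t ↦ ∫_{[0,1]^d} [ (μ/A⁺)σ(c⁺) + (μ/A⁻)σ(c⁻) ] dx equals −∫_{[0,1]^d} [ μ(div u)·( c⁺/A⁺ + c⁻/A⁻ ) + 4μ|∇√c⁺|² + 4μ|∇√c⁻|² + με|Δψ|² ] dx. -/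

import Mathlib

open MeasureTheory

/-- Spatial partial derivative in direction `i` of `g : ℝ^d → ℝ` at `x`. -/
noncomputable def pd (d : ℕ) (i : Fin d) (g : (Fin d → ℝ) → ℝ) (x : Fin d → ℝ) : ℝ :=
  fderiv ℝ g x (Pi.single i 1)

/-- `σ(s) = s log s − s + 1`. -/
noncomputable def sig (s : ℝ) : ℝ := s * Real.log s - s + 1

section Aux
variable {d : ℕ} {i : Fin d} {f g : (Fin d → ℝ) → ℝ} {x : Fin d → ℝ}

lemma pd_eq_of_hasFDerivAt {L : (Fin d → ℝ) →L[ℝ] ℝ}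
    (h : HasFDerivAt f L x) : pd d i f x = L (Pi.single i 1) := by
  rw [pd, h.fderiv]

lemma contDiff_pd (i : Fin d) (hg : ContDiff ℝ (⊤ : ℕ∞) g) :
    ContDiff ℝ (⊤ : ℕ∞) (pd d i g) := by
  have h : pd d i g = fun x => (ContinuousLinearMap.apply ℝ ℝ (Pi.single i 1)) (fderiv ℝ g x) := rfl
  rw [h]
  exact (ContinuousLinearMap.apply ℝ ℝ (Pi.single i 1)).contDiff.comp (hg.fderiv_right (m := ((⊤ : ℕ∞) : WithTop ℕ∞)) (by exact_mod_cast le_top))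

lemma fderiv_shift (c : Fin d → ℝ) (hf : DifferentiableAt ℝ f (x + c)) :
    fderiv ℝ (fun y => f (y + c)) x = fderiv ℝ f (x + c) := by
  have h1 : HasFDerivAt (fun y : Fin d → ℝ => y + c) (ContinuousLinearMap.id ℝ _) x := by
    simpa using (hasFDerivAt_id (𝕜 := ℝ) x).add_const c
  have := hf.hasFDerivAt.comp x h1
  simpa [Function.comp_def] using this.fderiv

lemma pd_per (i : Fin d)
    (hper : ∀ (z : Fin d → ℤ) (x : Fin d → ℝ), g (x + fun k => (z k : ℝ)) = g x)
    (hg : ContDiff ℝ (⊤ : ℕ∞) g) (z : Fin d → ℤ) (x : Fin d → ℝ) :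
    pd d i g (x + fun k => (z k : ℝ)) = pd d i g x := by
  have h : g = fun y => g (y + fun k => (z k : ℝ)) := by
    funext y; rw [hper]
  conv_rhs => rw [h]
  rw [pd, pd, fderiv_shift _ (hg.differentiable (by simp) _)]

lemma pd_add (hf : DifferentiableAt ℝ f x) (hg : DifferentiableAt ℝ g x) :
    pd d i (fun y => f y + g y) x = pd d i f x + pd d i g x := by
  simp [pd, fderiv_fun_add hf hg]

lemma pd_sub (hf : DifferentiableAt ℝ f x) (hg : DifferentiableAt ℝ g x) :
    pd d i (fun y => f y - g y) x = pd d i f x - pd d i g x := by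
  simp [pd, fderiv_fun_sub hf hg]

lemma pd_mul (hf : DifferentiableAt ℝ f x) (hg : DifferentiableAt ℝ g x) :
    pd d i (fun y => f y * g y) x = f x * pd d i g x + g x * pd d i f x := by
  simp [pd, fderiv_fun_mul hf hg]

lemma pd_const_mul (c : ℝ) (hf : DifferentiableAt ℝ f x) :
    pd d i (fun y => c * f y) x = c * pd d i f x := by
  simp [pd, fderiv_const_mul hf]

lemma pd_log (hf : DifferentiableAt ℝ f x) (h0 : f x ≠ 0) :
    pd d i (fun y => Real.log (f y)) x = pd d i f x / f x := by
  have h := (Real.hasDerivAt_log h0).comp_hasFDerivAt x hf.hasFDerivAt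
  have h' : HasFDerivAt (fun y => Real.log (f y)) ((f x)⁻¹ • fderiv ℝ f x) x := h
  rw [pd_eq_of_hasFDerivAt h']
  simp [pd, div_eq_inv_mul]

lemma pd_sqrt (hf : DifferentiableAt ℝ f x) (h0 : 0 < f x) :
    pd d i (fun y => Real.sqrt (f y)) x = pd d i f x / (2 * Real.sqrt (f x)) := by
  have h := (Real.hasDerivAt_sqrt h0.ne').comp_hasFDerivAt x hf.hasFDerivAt
  have h' : HasFDerivAt (fun y => Real.sqrt (f y)) ((1 / (2 * Real.sqrt (f x))) • fderiv ℝ f x) x := h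
  rw [pd_eq_of_hasFDerivAt h']
  simp [pd, div_eq_inv_mul]

end Aux

lemma integral_pd_eq_zero {n : ℕ} (i : Fin (n+1)) {g : (Fin (n+1) → ℝ) → ℝ}
    (hg : ContDiff ℝ (⊤ : ℕ∞) g)
    (hper : ∀ (z : Fin (n+1) → ℤ) (x : Fin (n+1) → ℝ), g (x + fun k => (z k : ℝ)) = g x) :
    ∫ x in Set.Icc (0 : Fin (n+1) → ℝ) 1, pd (n+1) i g x = 0 := by
  have hle : (0 : Fin (n+1) → ℝ) ≤ 1 := fun _ => zero_le_one
  have hdiff := hg.differentiable (by simp)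
  have hcont := hg.continuous
  set f : Fin (n+1) → (Fin (n+1) → ℝ) → ℝ := fun j x => if j = i then g x else 0 with hf
  set f' : Fin (n+1) → (Fin (n+1) → ℝ) → (Fin (n+1) → ℝ) →L[ℝ] ℝ :=
    fun j x => if j = i then fderiv ℝ g x else 0 with hf'
  have hpd : Continuous (pd (n+1) i g) := by
    have : pd (n+1) i g =
        fun x => (ContinuousLinearMap.apply ℝ ℝ (Pi.single i 1)) (fderiv ℝ g x) := rfl
    rw [this]
    exact (ContinuousLinearMap.apply ℝ ℝ (Pi.single i 1)).continuous.comp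
      (hg.continuous_fderiv (by simp))
  have key := MeasureTheory.integral_divergence_of_hasFDerivAt_off_countable'
    (0 : Fin (n+1) → ℝ) 1 hle f f' ∅ Set.countable_empty
    (fun j => by
      by_cases h : j = i
      · simpa [hf, h] using hcont.continuousOn
      · simp only [hf, if_neg h]; exact continuousOn_const)
    (fun x _ j => by
      by_cases h : j = i
      · simpa [hf, hf', h] using (hdiff x).hasFDerivAt
      · simpa [hf, hf', h] using hasFDerivAt_const (0:ℝ) x)
    (by
      have : (fun x => ∑ j, f' j x (Pi.single j 1)) = pd (n+1) i g := by
        funext x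
        rw [Finset.sum_eq_single i]
        · simp [hf', pd]
        · intro b _ hb; simp [hf', hb]
        · simp
      rw [this]
      exact hpd.integrableOn_Icc)
  have hz : ∀ j : Fin (n+1), ((∫ x in Set.Icc ((0 : Fin (n+1) → ℝ) ∘ j.succAbove) ((1 : Fin (n+1) → ℝ) ∘ j.succAbove),
        f j (j.insertNth ((1 : Fin (n+1) → ℝ) j) x)) -
      ∫ x in Set.Icc ((0 : Fin (n+1) → ℝ) ∘ j.succAbove) ((1 : Fin (n+1) → ℝ) ∘ j.succAbove),
        f j (j.insertNth ((0 : Fin (n+1) → ℝ) j) x)) = 0 := by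
    intro j
    by_cases h : j = i
    · subst h
      have hgeq : ∀ x : Fin n → ℝ,
          g (j.insertNth ((1 : Fin (n+1) → ℝ) j) x) = g (j.insertNth ((0 : Fin (n+1) → ℝ) j) x) := by
        intro x
        have h2 : j.insertNth ((1 : Fin (n+1) → ℝ) j) x
            = (j.insertNth ((0 : Fin (n+1) → ℝ) j) x) + fun k => ((Pi.single j 1 : Fin (n+1) → ℤ) k : ℝ) := by
          funext k
          by_cases hk : k = j
          · subst hk; simp
          · obtain ⟨m, rfl⟩ := Fin.exists_succAbove_eq hk
            simp [Fin.insertNth_apply_succAbove, Pi.single_apply, (Fin.succAbove_ne j m)]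
        rw [h2, hper]
      simp only [hf, if_pos rfl]
      rw [MeasureTheory.integral_congr_ae (Filter.Eventually.of_forall fun x => hgeq x)]
      ring
    · simp [hf, h]
  have hsum : ∑ j, ((∫ x in Set.Icc ((0 : Fin (n+1) → ℝ) ∘ j.succAbove) ((1 : Fin (n+1) → ℝ) ∘ j.succAbove),
        f j (j.insertNth ((1 : Fin (n+1) → ℝ) j) x)) -
      ∫ x in Set.Icc ((0 : Fin (n+1) → ℝ) ∘ j.succAbove) ((1 : Fin (n+1) → ℝ) ∘ j.succAbove),
        f j (j.insertNth ((0 : Fin (n+1) → ℝ) j) x)) = 0 :=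
    Finset.sum_eq_zero fun j _ => hz j
  rw [← hsum, ← key]
  apply MeasureTheory.integral_congr_ae
  filter_upwards with x
  rw [Finset.sum_eq_single i]
  · simp [hf', pd]
  · intro b _ hb; simp [hf', hb]
  · simp

lemma param_deriv {d : ℕ} {G G' : ℝ → (Fin d → ℝ) → ℝ} (t : ℝ)
    (hG' : Continuous fun q : ℝ × (Fin d → ℝ) => G' q.1 q.2)
    (hGx : ∀ s, Continuous (G s))
    (hdiff : ∀ (s : ℝ) (x : Fin d → ℝ), HasDerivAt (fun r => G r x) (G' s x) s) :
    HasDerivAt (fun s => ∫ x in Set.Icc (0 : Fin d → ℝ) 1, G s x)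
      (∫ x in Set.Icc (0 : Fin d → ℝ) 1, G' t x) t := by
  have hK : IsCompact ((Set.Icc (t-1) (t+1)) ×ˢ (Set.Icc (0 : Fin d → ℝ) 1)) :=
    (isCompact_Icc).prod (isCompact_Icc)
  obtain ⟨C, hC⟩ := hK.exists_bound_of_continuousOn hG'.continuousOn
  have h := hasDerivAt_integral_of_dominated_loc_of_deriv_le
    (F := G) (F' := G') (x₀ := t) (bound := fun _ => C)
    (μ := volume.restrict (Set.Icc (0 : Fin d → ℝ) 1)) (s := Metric.ball t 1) (Metric.ball_mem_nhds t one_pos)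
    (Filter.Eventually.of_forall fun s => (hGx s).aestronglyMeasurable)
    (hGx t).integrableOn_Icc
    ((hG'.comp (continuous_const.prodMk continuous_id)).aestronglyMeasurable)
    ?_ ?_ ?_
  · exact h.2
  · filter_upwards [ae_restrict_mem measurableSet_Icc] with x hx
    intro s hs
    have hs' : s ∈ Set.Icc (t-1) (t+1) := by
      rw [Metric.mem_ball, Real.dist_eq] at hs
      constructor <;> [linarith [abs_lt.mp hs]; linarith [(abs_lt.mp hs).2]]
    exact hC (s, x) ⟨hs', hx⟩
  · have : Fact (volume (Set.Icc (0 : Fin d → ℝ) 1) < ⊤) :=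
      ⟨(isCompact_Icc).measure_lt_top⟩
    exact (integrableOn_const_iff).mpr (Or.inr (isCompact_Icc).measure_lt_top)
  · exact Filter.Eventually.of_forall fun x s _ => hdiff s x

lemma hasDerivAt_sig {c : ℝ} (hc : 0 < c) : HasDerivAt sig (Real.log c) c := by
  have h1 : HasDerivAt (fun s : ℝ => s * Real.log s) (1 * Real.log c + c * c⁻¹) c :=
    (hasDerivAt_id c).mul (Real.hasDerivAt_log hc.ne')
  have h2 : HasDerivAt (fun s : ℝ => s * Real.log s - s + 1)
      (1 * Real.log c + c * c⁻¹ - 1) c :=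
    (h1.sub (hasDerivAt_id c)).add_const 1
  have h3 : 1 * Real.log c + c * c⁻¹ - 1 = Real.log c := by
    field_simp
    ring
  rw [h3] at h2
  exact h2

noncomputable def Dt {d : ℕ} (c : ℝ → (Fin d → ℝ) → ℝ) (s : ℝ) (x : Fin d → ℝ) : ℝ :=
  fderiv ℝ (fun q : ℝ × (Fin d → ℝ) => c q.1 q.2) (s, x) (1, 0)

lemma hasDerivAt_slice {d : ℕ} {c : ℝ → (Fin d → ℝ) → ℝ}
    (hc : ContDiff ℝ (⊤ : ℕ∞) (fun q : ℝ × (Fin d → ℝ) => c q.1 q.2)) (s : ℝ) (x : Fin d → ℝ) :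
    HasDerivAt (fun r => c r x) (Dt c s x) s := by
  have h1 : HasFDerivAt (fun q : ℝ × (Fin d → ℝ) => c q.1 q.2)
      (fderiv ℝ (fun q : ℝ × (Fin d → ℝ) => c q.1 q.2) (s, x)) (s, x) :=
    (hc.differentiable (by simp) _).hasFDerivAt
  have h2 : HasDerivAt (fun r : ℝ => (r, x)) ((1 : ℝ), (0 : Fin d → ℝ)) s :=
    (hasDerivAt_id s).prodMk (hasDerivAt_const s x)
  exact h1.comp_hasDerivAt s h2

lemma deriv_slice {d : ℕ} {c : ℝ → (Fin d → ℝ) → ℝ}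
    (hc : ContDiff ℝ (⊤ : ℕ∞) (fun q : ℝ × (Fin d → ℝ) => c q.1 q.2)) (s : ℝ) (x : Fin d → ℝ) :
    deriv (fun r => c r x) s = Dt c s x := (hasDerivAt_slice hc s x).deriv

lemma continuous_Dt {d : ℕ} {c : ℝ → (Fin d → ℝ) → ℝ}
    (hc : ContDiff ℝ (⊤ : ℕ∞) (fun q : ℝ × (Fin d → ℝ) => c q.1 q.2)) :
    Continuous fun q : ℝ × (Fin d → ℝ) => Dt c q.1 q.2 := by
  have := (ContinuousLinearMap.apply ℝ ℝ ((1 : ℝ), (0 : Fin d → ℝ))).continuous.comp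
    (hc.continuous_fderiv (by simp))
  exact this

section Key
variable {d : ℕ}

lemma contDiff_log_comp {P : (Fin d → ℝ) → ℝ} (hP : ContDiff ℝ (⊤ : ℕ∞) P)
    (hpos : ∀ y, 0 < P y) : ContDiff ℝ (⊤ : ℕ∞) (fun y => Real.log (P y)) :=
  contDiff_iff_contDiffAt.2 fun y =>
    (Real.contDiffAt_log.2 (hpos y).ne').comp y hP.contDiffAt

lemma pd_neg {i : Fin d} {f : (Fin d → ℝ) → ℝ} {x : Fin d → ℝ} :
    pd d i (fun y => -f y) x = -pd d i f x := by
  by_cases hf : DifferentiableAt ℝ f x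
  · simp [pd, fderiv_neg]
  · have hnf : ¬ DifferentiableAt ℝ (fun y => -f y) x := by
      intro h; exact hf (differentiableAt_fun_neg_iff.mp h)
    simp [pd, fderiv_zero_of_not_differentiableAt, hf, hnf]

/-- The flux vector field in direction `j`. -/
noncomputable def Wf (d : ℕ) (μ e Ap Am : ℝ) (P M Ψ : (Fin d → ℝ) → ℝ)
    (U : (Fin d → ℝ) → Fin d → ℝ) (j : Fin d) : (Fin d → ℝ) → ℝ := fun y =>
  μ / Ap * (-((Real.log (P y) - 1) * (P y * U y j)) + Ap * (Real.log (P y) * pd d j P y)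
      + Ap * e * (Real.log (P y) * (P y * pd d j Ψ y)))
    + μ / Am * (-((Real.log (M y) - 1) * (M y * U y j)) + Am * (Real.log (M y) * pd d j M y)
      - Am * e * (Real.log (M y) * (M y * pd d j Ψ y)))
    + μ * e * ((M y - P y) * pd d j Ψ y)

lemma contDiff_Wf (μ e Ap Am : ℝ) {P M Ψ : (Fin d → ℝ) → ℝ} {U : (Fin d → ℝ) → Fin d → ℝ}
    (j : Fin d) (hP : ContDiff ℝ (⊤ : ℕ∞) P) (hM : ContDiff ℝ (⊤ : ℕ∞) M) (hΨ : ContDiff ℝ (⊤ : ℕ∞) Ψ)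
    (hUj : ContDiff ℝ (⊤ : ℕ∞) (fun y => U y j)) (hPpos : ∀ y, 0 < P y) (hMpos : ∀ y, 0 < M y) :
    ContDiff ℝ (⊤ : ℕ∞) (Wf d μ e Ap Am P M Ψ U j) := by
  have hLP := contDiff_log_comp hP hPpos
  have hLM := contDiff_log_comp hM hMpos
  have hgP := contDiff_pd j hP
  have hgM := contDiff_pd j hM
  have hgΨ := contDiff_pd j hΨ
  unfold Wf
  exact ((contDiff_const.mul ((((hLP.sub contDiff_const).mul (hP.mul hUj)).neg.add
      (contDiff_const.mul (hLP.mul hgP))).add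
      (contDiff_const.mul (hLP.mul (hP.mul hgΨ))))).add
    (contDiff_const.mul ((((hLM.sub contDiff_const).mul (hM.mul hUj)).neg.add
      (contDiff_const.mul (hLM.mul hgM))).sub
      (contDiff_const.mul (hLM.mul (hM.mul hgΨ)))))).add
    (contDiff_const.mul ((hM.sub hP).mul hgΨ))

end Key

section Key2
variable {d : ℕ}

lemma pd_const {i : Fin d} {x : Fin d → ℝ} (c : ℝ) : pd d i (fun _ => c) x = 0 := by
  simp [pd]

lemma key_pointwise (j : Fin d) (μ e Ap Am : ℝ) (hAp : Ap ≠ 0) (hAm : Am ≠ 0)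
    {P M Ψ : (Fin d → ℝ) → ℝ} {U : (Fin d → ℝ) → Fin d → ℝ}
    (hP : ContDiff ℝ (⊤ : ℕ∞) P) (hM : ContDiff ℝ (⊤ : ℕ∞) M) (hΨ : ContDiff ℝ (⊤ : ℕ∞) Ψ)
    (hUj : ContDiff ℝ (⊤ : ℕ∞) (fun y => U y j))
    (hPpos : ∀ y, 0 < P y) (hMpos : ∀ y, 0 < M y) (x : Fin d → ℝ) :
    μ / Ap * Real.log (P x) *
        (pd d j (fun y => Ap * pd d j P y) x + pd d j (fun y => Ap * e * P y * pd d j Ψ y) x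
          - pd d j (fun y => P y * U y j) x)
      + μ / Am * Real.log (M x) *
        (pd d j (fun y => Am * pd d j M y) x - pd d j (fun y => Am * e * M y * pd d j Ψ y) x
          - pd d j (fun y => M y * U y j) x)
      + (μ * pd d j (fun y => U y j) x * (P x / Ap + M x / Am)
        + 4 * μ * (pd d j (fun y => Real.sqrt (P y)) x) ^ 2
        + 4 * μ * (pd d j (fun y => Real.sqrt (M y)) x) ^ 2
        + μ * e * ((M x - P x) * pd d j (fun y => pd d j Ψ y) x))
      = pd d j (Wf d μ e Ap Am P M Ψ U j) x := by
  have hp := hPpos x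
  have hm := hMpos x
  have da : ∀ {f : (Fin d → ℝ) → ℝ}, ContDiff ℝ (⊤ : ℕ∞) f → DifferentiableAt ℝ f x :=
    fun h => (h.differentiable (by simp)).differentiableAt
  have hLP := contDiff_log_comp hP hPpos
  have hLM := contDiff_log_comp hM hMpos
  have hgP := contDiff_pd (g := P) j hP
  have hgM := contDiff_pd (g := M) j hM
  have hgΨ := contDiff_pd (g := Ψ) j hΨ
  have hc3 : ContDiff ℝ (⊤ : ℕ∞) (fun y => (Real.log (P y) - 1) * (P y * U y j)) :=
    (hLP.sub contDiff_const).mul (hP.mul hUj)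
  have hc1 : ContDiff ℝ (⊤ : ℕ∞) (fun y => Real.log (P y) * pd d j P y) := hLP.mul hgP
  have hc2 : ContDiff ℝ (⊤ : ℕ∞) (fun y => Real.log (P y) * (P y * pd d j Ψ y)) :=
    hLP.mul (hP.mul hgΨ)
  have hd3 : ContDiff ℝ (⊤ : ℕ∞) (fun y => (Real.log (M y) - 1) * (M y * U y j)) :=
    (hLM.sub contDiff_const).mul (hM.mul hUj)
  have hd1 : ContDiff ℝ (⊤ : ℕ∞) (fun y => Real.log (M y) * pd d j M y) := hLM.mul hgM
  have hd2 : ContDiff ℝ (⊤ : ℕ∞) (fun y => Real.log (M y) * (M y * pd d j Ψ y)) :=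
    hLM.mul (hM.mul hgΨ)
  have hc7 : ContDiff ℝ (⊤ : ℕ∞) (fun y => (M y - P y) * pd d j Ψ y) := (hM.sub hP).mul hgΨ
  have hceP : ContDiff ℝ (⊤ : ℕ∞) (fun y => Ap * e * P y) := contDiff_const.mul hP
  have hceM : ContDiff ℝ (⊤ : ℕ∞) (fun y => Am * e * M y) := contDiff_const.mul hM
  have hcA : ContDiff ℝ (⊤ : ℕ∞) (fun y => -((Real.log (P y) - 1) * (P y * U y j))
      + Ap * (Real.log (P y) * pd d j P y)
      + Ap * e * (Real.log (P y) * (P y * pd d j Ψ y))) :=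
    (hc3.neg.add (contDiff_const.mul hc1)).add (contDiff_const.mul hc2)
  have hcB : ContDiff ℝ (⊤ : ℕ∞) (fun y => -((Real.log (M y) - 1) * (M y * U y j))
      + Am * (Real.log (M y) * pd d j M y)
      - Am * e * (Real.log (M y) * (M y * pd d j Ψ y))) :=
    (hd3.neg.add (contDiff_const.mul hd1)).sub (contDiff_const.mul hd2)
  -- expand the right-hand side
  unfold Wf
  rw [pd_add (da ((contDiff_const.mul hcA).add (contDiff_const.mul hcB)))
        (da (contDiff_const.mul hc7)),
      pd_add (da (contDiff_const.mul hcA)) (da (contDiff_const.mul hcB)),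
      pd_const_mul _ (da hcA), pd_const_mul _ (da hcB), pd_const_mul _ (da hc7),
      pd_add (da (hc3.neg.add (contDiff_const.mul hc1))) (da (contDiff_const.mul hc2)),
      pd_add (da hc3.neg) (da (contDiff_const.mul hc1)),
      pd_neg, pd_const_mul _ (da hc1), pd_const_mul _ (da hc2),
      pd_sub (da (hd3.neg.add (contDiff_const.mul hd1))) (da (contDiff_const.mul hd2)),
      pd_add (da hd3.neg) (da (contDiff_const.mul hd1)),
      pd_neg, pd_const_mul _ (da hd1), pd_const_mul _ (da hd2)]
  -- expand the products
  rw [pd_mul (da (hLP.sub contDiff_const)) (da (hP.mul hUj)),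
      pd_mul (da (hLM.sub contDiff_const)) (da (hM.mul hUj)),
      pd_mul (da hLP) (da hgP), pd_mul (da hLM) (da hgM),
      pd_mul (da hLP) (da (hP.mul hgΨ)), pd_mul (da hLM) (da (hM.mul hgΨ)),
      pd_mul (da (hM.sub hP)) (da hgΨ),
      pd_mul (da hceP) (da hgΨ), pd_mul (da hceM) (da hgΨ),
      pd_mul (da hP) (da hgΨ), pd_mul (da hM) (da hgΨ),
      pd_mul (da hP) (da hUj), pd_mul (da hM) (da hUj),
      pd_sub (da hLP) (differentiableAt_const 1),
      pd_sub (da hLM) (differentiableAt_const 1),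
      pd_sub (da hM) (da hP),
      pd_const (1 : ℝ),
      pd_log (da hP) hp.ne', pd_log (da hM) hm.ne',
      pd_const_mul _ (da hgP), pd_const_mul _ (da hgM),
      pd_const_mul _ (da hP), pd_const_mul _ (da hM),
      pd_sqrt (da hP) hp, pd_sqrt (da hM) hm]
  have h4p : 4 * μ * (pd d j P x / (2 * Real.sqrt (P x))) ^ 2 = μ * (pd d j P x) ^ 2 / P x := by
    rw [div_pow, mul_pow, Real.sq_sqrt hp.le]
    field_simp
    ring
  have h4m : 4 * μ * (pd d j M x / (2 * Real.sqrt (M x))) ^ 2 = μ * (pd d j M x) ^ 2 / M x := by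
    rw [div_pow, mul_pow, Real.sq_sqrt hm.le]
    field_simp
    ring
  rw [h4p, h4m]
  field_simp
  ring

end Key2

section More
variable {d : ℕ}

lemma contDiff_sqrt_comp {P : (Fin d → ℝ) → ℝ} (hP : ContDiff ℝ (⊤ : ℕ∞) P)
    (hpos : ∀ y, 0 < P y) : ContDiff ℝ (⊤ : ℕ∞) (fun y => Real.sqrt (P y)) :=
  contDiff_iff_contDiffAt.2 fun y =>
    (Real.contDiffAt_sqrt (hpos y).ne').comp y hP.contDiffAt

end More

/-- evolution of the weighted concentration entropies. -/
theorem stmt18 (d : ℕ) (hd : 1 ≤ d) (μ e Ap Am ε : ℝ)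
    (hμ : 0 < μ) (he : 0 < e) (hAp : 0 < Ap) (hAm : 0 < Am) (hε : 0 < ε)
    (cp cm ψ : ℝ → (Fin d → ℝ) → ℝ) (u : ℝ → (Fin d → ℝ) → Fin d → ℝ)
    (hcp : ContDiff ℝ (⊤ : ℕ∞) (fun q : ℝ × (Fin d → ℝ) => cp q.1 q.2))
    (hcm : ContDiff ℝ (⊤ : ℕ∞) (fun q : ℝ × (Fin d → ℝ) => cm q.1 q.2))
    (hψ : ContDiff ℝ (⊤ : ℕ∞) (fun q : ℝ × (Fin d → ℝ) => ψ q.1 q.2))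
    (hu : ContDiff ℝ (⊤ : ℕ∞) (fun q : ℝ × (Fin d → ℝ) => u q.1 q.2))
    (hcppos : ∀ t x, 0 < cp t x) (hcmpos : ∀ t x, 0 < cm t x)
    (hcpper : ∀ t (z : Fin d → ℤ) (x : Fin d → ℝ),
      cp t (x + fun i => (z i : ℝ)) = cp t x)
    (hcmper : ∀ t (z : Fin d → ℤ) (x : Fin d → ℝ),
      cm t (x + fun i => (z i : ℝ)) = cm t x)
    (hψper : ∀ t (z : Fin d → ℤ) (x : Fin d → ℝ),
      ψ t (x + fun i => (z i : ℝ)) = ψ t x)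
    (huper : ∀ t (z : Fin d → ℤ) (x : Fin d → ℝ),
      u t (x + fun i => (z i : ℝ)) = u t x)
    (hcpeq : ∀ t x,
      deriv (fun s => cp s x) t + ∑ j, pd d j (fun y => cp t y * u t y j) x
        = ∑ j, pd d j (fun y => Ap * pd d j (cp t) y) x
          + ∑ j, pd d j (fun y => Ap * e * cp t y * pd d j (ψ t) y) x)
    (hcmeq : ∀ t x,
      deriv (fun s => cm s x) t + ∑ j, pd d j (fun y => cm t y * u t y j) x
        = ∑ j, pd d j (fun y => Am * pd d j (cm t) y) x
          - ∑ j, pd d j (fun y => Am * e * cm t y * pd d j (ψ t) y) x)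
    (hpois : ∀ t x,
      -(ε * ∑ j, pd d j (fun y => pd d j (ψ t) y) x) = e * (cp t x - cm t x)) :
    ∀ t : ℝ,
      HasDerivAt (fun s => ∫ x in Set.Icc (0 : Fin d → ℝ) 1,
          (μ / Ap * sig (cp s x) + μ / Am * sig (cm s x)))
        (-(∫ x in Set.Icc (0 : Fin d → ℝ) 1,
          (μ * (∑ j, pd d j (fun y => u t y j) x) * (cp t x / Ap + cm t x / Am)
            + 4 * μ * (∑ j, (pd d j (fun y => Real.sqrt (cp t y)) x) ^ 2)
            + 4 * μ * (∑ j, (pd d j (fun y => Real.sqrt (cm t y)) x) ^ 2)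
            + μ * ε * (∑ j, pd d j (fun y => pd d j (ψ t) y) x) ^ 2))) t := by
  intro t
  obtain ⟨n, rfl⟩ : ∃ n, d = n + 1 := ⟨d - 1, (Nat.succ_pred_eq_of_pos hd).symm⟩
  -- spatial slices are smooth
  have hPs : ContDiff ℝ (⊤ : ℕ∞) (cp t) := hcp.comp (contDiff_const.prodMk contDiff_id)
  have hMs : ContDiff ℝ (⊤ : ℕ∞) (cm t) := hcm.comp (contDiff_const.prodMk contDiff_id)
  have hΨs : ContDiff ℝ (⊤ : ℕ∞) (ψ t) := hψ.comp (contDiff_const.prodMk contDiff_id)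
  have hUs : ContDiff ℝ (⊤ : ℕ∞) (u t) := hu.comp (contDiff_const.prodMk contDiff_id)
  have hUj : ∀ j : Fin (n + 1), ContDiff ℝ (⊤ : ℕ∞) (fun y => u t y j) := fun j =>
    (ContinuousLinearMap.proj (R := ℝ) (φ := fun _ : Fin (n + 1) => ℝ) j).contDiff.comp hUs
  -- smoothness and periodicity of the flux field
  have hWcd : ∀ j : Fin (n + 1), ContDiff ℝ (⊤ : ℕ∞) (Wf (n + 1) μ e Ap Am (cp t) (cm t) (ψ t) (u t) j) := fun j =>
    contDiff_Wf μ e Ap Am j hPs hMs hΨs (hUj j) (hcppos t) (hcmpos t)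
  have hWper : ∀ (j : Fin (n + 1)) (z : Fin (n + 1) → ℤ) (y : Fin (n + 1) → ℝ),
      Wf (n + 1) μ e Ap Am (cp t) (cm t) (ψ t) (u t) j (y + fun k => (z k : ℝ)) = Wf (n + 1) μ e Ap Am (cp t) (cm t) (ψ t) (u t) j y := by
    intro j z y
    simp only [Wf]
    rw [hcpper t z y, hcmper t z y, huper t z y,
        pd_per j (hcpper t) hPs z y, pd_per j (hcmper t) hMs z y, pd_per j (hψper t) hΨs z y]
  -- joint continuity of the time-derivative integrand
  have hlogp : Continuous fun q : ℝ × (Fin (n + 1) → ℝ) => Real.log (cp q.1 q.2) :=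
    hcp.continuous.log fun q => (hcppos q.1 q.2).ne'
  have hlogm : Continuous fun q : ℝ × (Fin (n + 1) → ℝ) => Real.log (cm q.1 q.2) :=
    hcm.continuous.log fun q => (hcmpos q.1 q.2).ne'
  have hG'c : Continuous fun q : ℝ × (Fin (n + 1) → ℝ) =>
      μ / Ap * (Real.log (cp q.1 q.2) * Dt cp q.1 q.2)
        + μ / Am * (Real.log (cm q.1 q.2) * Dt cm q.1 q.2) :=
    (continuous_const.mul (hlogp.mul (continuous_Dt hcp))).add
      (continuous_const.mul (hlogm.mul (continuous_Dt hcm)))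
  have hsigc : Continuous sig := by
    have : Continuous fun s : ℝ => s * Real.log s - s + 1 :=
      (Real.continuous_mul_log.sub continuous_id).add continuous_const
    exact this
  have hGx : ∀ s : ℝ, Continuous fun x : Fin (n + 1) → ℝ =>
      μ / Ap * sig (cp s x) + μ / Am * sig (cm s x) := fun s =>
    (continuous_const.mul (hsigc.comp
        (hcp.continuous.comp (continuous_const.prodMk continuous_id)))).add
      (continuous_const.mul (hsigc.comp
        (hcm.continuous.comp (continuous_const.prodMk continuous_id))))
  have hdiff : ∀ (s : ℝ) (x : Fin (n + 1) → ℝ),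
      HasDerivAt (fun r => μ / Ap * sig (cp r x) + μ / Am * sig (cm r x))
        (μ / Ap * (Real.log (cp s x) * Dt cp s x)
          + μ / Am * (Real.log (cm s x) * Dt cm s x)) s := by
    intro s x
    have h1 : HasDerivAt (fun r => sig (cp r x)) (Real.log (cp s x) * Dt cp s x) s :=
      by have h := (hasDerivAt_sig (hcppos s x)).comp s (hasDerivAt_slice hcp s x); exact h
    have h2 : HasDerivAt (fun r => sig (cm r x)) (Real.log (cm s x) * Dt cm s x) s :=
      by have h := (hasDerivAt_sig (hcmpos s x)).comp s (hasDerivAt_slice hcm s x); exact h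
    exact (h1.const_mul (μ / Ap)).add (h2.const_mul (μ / Am))
  have hmain : HasDerivAt (fun s => ∫ x in Set.Icc (0 : Fin (n + 1) → ℝ) 1,
      (μ / Ap * sig (cp s x) + μ / Am * sig (cm s x)))
      (∫ x in Set.Icc (0 : Fin (n + 1) → ℝ) 1, (μ / Ap * (Real.log (cp t x) * Dt cp t x) + μ / Am * (Real.log (cm t x) * Dt cm t x))) t :=
    param_deriv (G := fun s x => μ / Ap * sig (cp s x) + μ / Am * sig (cm s x))
      (G' := fun s x => μ / Ap * (Real.log (cp s x) * Dt cp s x)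
        + μ / Am * (Real.log (cm s x) * Dt cm s x)) t hG'c hGx hdiff
  -- the pointwise divergence identity
  have hxall : ∀ x : Fin (n + 1) → ℝ,
      (μ / Ap * (Real.log (cp t x) * Dt cp t x) + μ / Am * (Real.log (cm t x) * Dt cm t x))
        + (μ * (∑ j, pd (n + 1) j (fun y => u t y j) x) * (cp t x / Ap + cm t x / Am)
        + 4 * μ * (∑ j, (pd (n + 1) j (fun y => Real.sqrt (cp t y)) x) ^ 2)
        + 4 * μ * (∑ j, (pd (n + 1) j (fun y => Real.sqrt (cm t y)) x) ^ 2)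
        + μ * ε * (∑ j, pd (n + 1) j (fun y => pd (n + 1) j (ψ t) y) x) ^ 2)
      = ∑ j, pd (n + 1) j (Wf (n + 1) μ e Ap Am (cp t) (cm t) (ψ t) (u t) j) x := by
    intro x
    have h1 : Dt cp t x = (∑ j, pd (n + 1) j (fun y => Ap * pd (n + 1) j (cp t) y) x) + (∑ j, pd (n + 1) j (fun y => Ap * e * cp t y * pd (n + 1) j (ψ t) y) x) - (∑ j, pd (n + 1) j (fun y => cp t y * u t y j) x) := by
      have h := hcpeq t x
      rw [deriv_slice hcp] at h
      linarith
    have h2 : Dt cm t x = (∑ j, pd (n + 1) j (fun y => Am * pd (n + 1) j (cm t) y) x) - (∑ j, pd (n + 1) j (fun y => Am * e * cm t y * pd (n + 1) j (ψ t) y) x) - (∑ j, pd (n + 1) j (fun y => cm t y * u t y j) x) := by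
      have h := hcmeq t x
      rw [deriv_slice hcm] at h
      linarith
    have hps := hpois t x
    have hsum : (∑ j, (μ / Ap * Real.log (cp t x) *
        (pd (n + 1) j (fun y => Ap * pd (n + 1) j (cp t) y) x + pd (n + 1) j (fun y => Ap * e * cp t y * pd (n + 1) j (ψ t) y) x
          - pd (n + 1) j (fun y => cp t y * u t y j) x)
      + μ / Am * Real.log (cm t x) *
        (pd (n + 1) j (fun y => Am * pd (n + 1) j (cm t) y) x - pd (n + 1) j (fun y => Am * e * cm t y * pd (n + 1) j (ψ t) y) x
          - pd (n + 1) j (fun y => cm t y * u t y j) x)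
      + (μ * pd (n + 1) j (fun y => u t y j) x * (cp t x / Ap + cm t x / Am)
        + 4 * μ * (pd (n + 1) j (fun y => Real.sqrt (cp t y)) x) ^ 2
        + 4 * μ * (pd (n + 1) j (fun y => Real.sqrt (cm t y)) x) ^ 2
        + μ * e * ((cm t x - cp t x) * pd (n + 1) j (fun y => pd (n + 1) j (ψ t) y) x))))
        = ∑ j, pd (n + 1) j (Wf (n + 1) μ e Ap Am (cp t) (cm t) (ψ t) (u t) j) x :=
      Finset.sum_congr rfl fun j _ => key_pointwise j μ e Ap Am hAp.ne' hAm.ne'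
        hPs hMs hΨs (hUj j) (hcppos t) (hcmpos t) x
    rw [← hsum]
    have hstep1 : (∑ j, (μ / Ap * Real.log (cp t x) *
        (pd (n + 1) j (fun y => Ap * pd (n + 1) j (cp t) y) x + pd (n + 1) j (fun y => Ap * e * cp t y * pd (n + 1) j (ψ t) y) x
          - pd (n + 1) j (fun y => cp t y * u t y j) x)
      + μ / Am * Real.log (cm t x) *
        (pd (n + 1) j (fun y => Am * pd (n + 1) j (cm t) y) x - pd (n + 1) j (fun y => Am * e * cm t y * pd (n + 1) j (ψ t) y) x
          - pd (n + 1) j (fun y => cm t y * u t y j) x)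
      + (μ * pd (n + 1) j (fun y => u t y j) x * (cp t x / Ap + cm t x / Am)
        + 4 * μ * (pd (n + 1) j (fun y => Real.sqrt (cp t y)) x) ^ 2
        + 4 * μ * (pd (n + 1) j (fun y => Real.sqrt (cm t y)) x) ^ 2
        + μ * e * ((cm t x - cp t x) * pd (n + 1) j (fun y => pd (n + 1) j (ψ t) y) x))))
        = ∑ j, (μ / Ap * Real.log (cp t x) * (pd (n + 1) j (fun y => Ap * pd (n + 1) j (cp t) y) x)
      + μ / Ap * Real.log (cp t x) * (pd (n + 1) j (fun y => Ap * e * cp t y * pd (n + 1) j (ψ t) y) x)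
      - μ / Ap * Real.log (cp t x) * (pd (n + 1) j (fun y => cp t y * u t y j) x)
      + μ / Am * Real.log (cm t x) * (pd (n + 1) j (fun y => Am * pd (n + 1) j (cm t) y) x)
      - μ / Am * Real.log (cm t x) * (pd (n + 1) j (fun y => Am * e * cm t y * pd (n + 1) j (ψ t) y) x)
      - μ / Am * Real.log (cm t x) * (pd (n + 1) j (fun y => cm t y * u t y j) x)
      + μ * (cp t x / Ap + cm t x / Am) * (pd (n + 1) j (fun y => u t y j) x)
      + 4 * μ * (pd (n + 1) j (fun y => Real.sqrt (cp t y)) x) ^ 2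
      + 4 * μ * (pd (n + 1) j (fun y => Real.sqrt (cm t y)) x) ^ 2
      + μ * e * (cm t x - cp t x) * (pd (n + 1) j (fun y => pd (n + 1) j (ψ t) y) x)) :=
      Finset.sum_congr rfl fun j _ => by ring
    rw [hstep1, h1, h2]
    simp only [Finset.sum_add_distrib, Finset.sum_sub_distrib, ← Finset.mul_sum]
    linear_combination (-(μ * (∑ j, pd (n + 1) j (fun y => pd (n + 1) j (ψ t) y) x))) * hps
  -- integrate the identity
  have key : (∫ x in Set.Icc (0 : Fin (n + 1) → ℝ) 1, (μ / Ap * (Real.log (cp t x) * Dt cp t x) + μ / Am * (Real.log (cm t x) * Dt cm t x)))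
      = -(∫ x in Set.Icc (0 : Fin (n + 1) → ℝ) 1,
        (μ * (∑ j, pd (n + 1) j (fun y => u t y j) x) * (cp t x / Ap + cm t x / Am)
          + 4 * μ * (∑ j, (pd (n + 1) j (fun y => Real.sqrt (cp t y)) x) ^ 2)
          + 4 * μ * (∑ j, (pd (n + 1) j (fun y => Real.sqrt (cm t y)) x) ^ 2)
          + μ * ε * (∑ j, pd (n + 1) j (fun y => pd (n + 1) j (ψ t) y) x) ^ 2)) := by
    have hGtc : Continuous fun x : Fin (n + 1) → ℝ => (μ / Ap * (Real.log (cp t x) * Dt cp t x) + μ / Am * (Real.log (cm t x) * Dt cm t x)) :=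
      hG'c.comp (continuous_const.prodMk continuous_id)
    have hRc : Continuous fun x : Fin (n + 1) → ℝ =>
        (μ * (∑ j, pd (n + 1) j (fun y => u t y j) x) * (cp t x / Ap + cm t x / Am)
          + 4 * μ * (∑ j, (pd (n + 1) j (fun y => Real.sqrt (cp t y)) x) ^ 2)
          + 4 * μ * (∑ j, (pd (n + 1) j (fun y => Real.sqrt (cm t y)) x) ^ 2)
          + μ * ε * (∑ j, pd (n + 1) j (fun y => pd (n + 1) j (ψ t) y) x) ^ 2) := by
      refine (((Continuous.mul ?_ ?_).add (continuous_const.mul ?_)).add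
        (continuous_const.mul ?_)).add (continuous_const.mul (Continuous.pow ?_ 2))
      · exact continuous_const.mul (continuous_finset_sum _ fun j _ =>
          (contDiff_pd j (hUj j)).continuous)
      · exact ((hPs.continuous).div_const Ap).add ((hMs.continuous).div_const Am)
      · exact continuous_finset_sum _ fun j _ =>
          ((contDiff_pd j (contDiff_sqrt_comp hPs (hcppos t))).continuous).pow 2
      · exact continuous_finset_sum _ fun j _ =>
          ((contDiff_pd j (contDiff_sqrt_comp hMs (hcmpos t))).continuous).pow 2
      · exact continuous_finset_sum _ fun j _ =>
          (contDiff_pd j (contDiff_pd j hΨs)).continuous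
    have h0 : (∫ x in Set.Icc (0 : Fin (n + 1) → ℝ) 1,
        ((μ / Ap * (Real.log (cp t x) * Dt cp t x) + μ / Am * (Real.log (cm t x) * Dt cm t x))
          + (μ * (∑ j, pd (n + 1) j (fun y => u t y j) x) * (cp t x / Ap + cm t x / Am)
            + 4 * μ * (∑ j, (pd (n + 1) j (fun y => Real.sqrt (cp t y)) x) ^ 2)
            + 4 * μ * (∑ j, (pd (n + 1) j (fun y => Real.sqrt (cm t y)) x) ^ 2)
            + μ * ε * (∑ j, pd (n + 1) j (fun y => pd (n + 1) j (ψ t) y) x) ^ 2))) = 0 := by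
      rw [MeasureTheory.integral_congr_ae (Filter.Eventually.of_forall hxall)]
      rw [MeasureTheory.integral_finset_sum _ (fun j _ =>
        ((contDiff_pd j (hWcd j)).continuous.integrableOn_Icc))]
      exact Finset.sum_eq_zero fun j _ => integral_pd_eq_zero j (hWcd j) (hWper j)
    rw [MeasureTheory.integral_add hGtc.integrableOn_Icc hRc.integrableOn_Icc] at h0
    linarith
  rw [key] at hmain
  exact hmain
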